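/- arXiv:1705.04731 — 8 statements merged into one kernel-verified Lean document; each statement's English description precedes it below -/
import Mathlib

section
/- Let A be a commutative MVW-rig and S ⊆ A. Then the set ⟨S⟩ = { x ∈ A : x ≤ a₁s₁ ⊕ ⋯ ⊕ aₙsₙ for some n, some s₁,…,sₙ ∈ S, and coefficients aᵢ each either an element of A (acting by product) or a natural number (acting by repeated ⊕-addition) } is an ideal of A containing S, and it is the smallest such ideal: every ideal of A containing S contains ⟨S⟩. -/
/-- An MV-algebra `(A, ⊕, ¬, 0)`. -/
class MValg (A : Type*) where
  add : A → A → A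
  neg : A → A
  zero : A
  add_assoc : ∀ x y z : A, add x (add y z) = add (add x y) z
  add_comm : ∀ x y : A, add x y = add y x
  add_zero : ∀ x : A, add x zero = x
  add_neg_zero : ∀ x : A, add x (neg zero) = neg zero
  neg_neg : ∀ x : A, neg (neg x) = x
  mv6 : ∀ x y : A, add (neg (add (neg x) y)) y = add (neg (add (neg y) x)) x

namespace MValg

variable {A : Type*} [MValg A]

/-- Truncated difference `x ⊖ y = ¬(¬x ⊕ y)`. -/
def sub (x y : A) : A := neg (add (neg x) y)

/-- The natural MV-order: `x ≤ y` iff `x ⊖ y = 0`. -/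
def le (x y : A) : Prop := sub x y = zero

/-- Join: `x ∨ y = (x ⊖ y) ⊕ y`. -/
def sup (x y : A) : A := add (sub x y) y

/-- Meet: `x ∧ y = ¬(¬x ∨ ¬y)`. -/
def inf (x y : A) : A := neg (sup (neg x) (neg y))

end MValg

/-- An MVW-rig: an MV-algebra with an associative product interacting with ⊕ and ⊖. -/
class MVWrig (A : Type*) extends MValg A where
  mul : A → A → A
  mul_assoc : ∀ a b c : A, mul (mul a b) c = mul a (mul b c)
  mul_zero : ∀ a : A, mul a zero = zero
  zero_mul : ∀ a : A, mul zero a = zero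
  mul_add_le : ∀ a b c : A, MValg.le (mul a (MValg.add b c)) (MValg.add (mul a b) (mul a c))
  add_mul_le : ∀ a b c : A, MValg.le (mul (MValg.add b c) a) (MValg.add (mul b a) (mul c a))
  mul_sub_ge : ∀ a b c : A, MValg.le (MValg.sub (mul a b) (mul a c)) (mul a (MValg.sub b c))
  sub_mul_ge : ∀ a b c : A, MValg.le (MValg.sub (mul b a) (mul c a)) (mul (MValg.sub b c) a)

namespace MVWrig

variable {A : Type*} [MVWrig A]

/-- `pow a n` is the `(n+1)`-fold product `a^(n+1) = a·a⋯a`; exponents `n : ℕ` here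
correspond exactly to the exponents `n + 1 ≥ 1` ("n-fold products") of the paper. -/
def pow (a : A) : ℕ → A
  | 0 => a
  | n + 1 => mul (pow a n) a

/-- Ideals of an MVW-rig: contain 0, downward closed, closed under ⊕,
and absorbing for the product on both sides. -/
def IsIdeal (I : Set A) : Prop :=
  MValg.zero ∈ I ∧
  (∀ a b : A, MValg.le a b → b ∈ I → a ∈ I) ∧
  (∀ a b : A, a ∈ I → b ∈ I → MValg.add a b ∈ I) ∧
  (∀ a b : A, a ∈ I → mul a b ∈ I ∧ mul b a ∈ I)

/-- Prime ideals: `ab ∈ P` implies `a ∈ P` or `b ∈ P`. -/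
def IsPrimeIdeal (P : Set A) : Prop :=
  IsIdeal P ∧ ∀ a b : A, mul a b ∈ P → a ∈ P ∨ b ∈ P

/-- The ideal generated by a set: the smallest ideal containing it
(the intersection of all ideals containing it). -/
def genIdeal (S : Set A) : Set A := ⋂₀ {I : Set A | IsIdeal I ∧ S ⊆ I}

/-- The congruence relation associated to an ideal `I`:
`x ≡_I y` iff `(x ⊖ y) ⊕ (y ⊖ x) ∈ I`. -/
def relI (I : Set A) (x y : A) : Prop :=
  MValg.add (MValg.sub x y) (MValg.sub y x) ∈ I

/-- A congruence on an MVW-rig: an equivalence relation compatible with ⊕, ¬ and ·. -/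
def IsCongruence (r : A → A → Prop) : Prop :=
  Equivalence r ∧
  (∀ a b c d : A, r a b → r c d → r (MValg.add a c) (MValg.add b d)) ∧
  (∀ a b : A, r a b → r (MValg.neg a) (MValg.neg b)) ∧
  (∀ a b c d : A, r a b → r c d → r (mul a c) (mul b d))

/-- Homomorphisms of MVW-rigs. -/
def IsHom {A B : Type*} [MVWrig A] [MVWrig B] (f : A → B) : Prop :=
  f MValg.zero = MValg.zero ∧
  (∀ x y : A, f (MValg.add x y) = MValg.add (f x) (f y)) ∧
  (∀ x : A, f (MValg.neg x) = MValg.neg (f x)) ∧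
  (∀ x y : A, f (mul x y) = mul (f x) (f y))

end MVWrig

namespace MVWrig

variable {A : Type*} [MVWrig A]

/-- `n`-fold sum `n • s = s ⊕ ⋯ ⊕ s` (`n` times). -/
def nsmul (n : ℕ) (s : A) : A :=
  match n with
  | 0 => MValg.zero
  | n + 1 => MValg.add s (nsmul n s)

/-- Sum `⊕` of a finite list of elements. -/
def osum : List A → A
  | [] => MValg.zero
  | t :: ts => MValg.add t (osum ts)

/-- The set `⟨S⟩` of all `x` with `x ≤ a₁s₁ ⊕ ⋯ ⊕ aₙsₙ` where each `sᵢ ∈ S` and each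
coefficient `aᵢ` is either an element of `A` (acting by product) or a natural number
(acting by repeated ⊕-addition). -/
def genSet (S : Set A) : Set A :=
  {x : A | ∃ l : List A,
    (∀ t ∈ l, ∃ s ∈ S, (∃ a : A, t = mul a s) ∨ (∃ n : ℕ, t = nsmul n s)) ∧
    MValg.le x (osum l)}

end MVWrig

namespace MValg

variable {A : Type*} [MValg A]

lemma zero_add' (x : A) : add zero x = x := by rw [add_comm]; exact add_zero x

lemma neg_add_self' (x : A) : add (neg x) x = neg zero := by
  have h := mv6 x (neg zero)
  rw [add_neg_zero, neg_neg, zero_add'] at h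
  exact h.symm

lemma le_refl' (x : A) : le x x := by
  unfold le sub
  rw [neg_add_self', neg_neg]

lemma le_add_right (x c : A) : le x (add x c) := by
  unfold le sub
  rw [add_assoc, neg_add_self', add_comm, add_neg_zero, neg_neg]

lemma eq_add_of_le {x y : A} (h : le x y) : add x (sub y x) = y := by
  unfold le sub at h
  unfold sub
  have h6 := mv6 y x
  rw [h, zero_add'] at h6
  rw [add_comm]
  exact h6

lemma le_iff_exists {x y : A} : le x y ↔ ∃ c, add x c = y := by
  constructor
  · intro h; exact ⟨sub y x, eq_add_of_le h⟩
  · rintro ⟨c, rfl⟩; exact le_add_right x c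

lemma le_trans' {x y z : A} (h1 : le x y) (h2 : le y z) : le x z := by
  rcases le_iff_exists.mp h1 with ⟨c, rfl⟩
  rcases le_iff_exists.mp h2 with ⟨d, rfl⟩
  rw [← add_assoc]
  exact le_add_right x _

lemma add_le_add' {a b c d : A} (h1 : le a b) (h2 : le c d) :
    le (add a c) (add b d) := by
  rcases le_iff_exists.mp h1 with ⟨e, rfl⟩
  rcases le_iff_exists.mp h2 with ⟨f, rfl⟩
  refine le_iff_exists.mpr ⟨add e f, ?_⟩
  rw [← add_assoc, ← add_assoc]
  congr 1
  rw [add_assoc, add_assoc, add_comm e c]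

lemma le_zero_iff' {a : A} : le a zero ↔ a = zero := by
  unfold le sub
  rw [add_zero, neg_neg]

lemma zero_le' (a : A) : le zero a := by
  unfold le sub
  rw [add_comm (neg zero) a, add_neg_zero, neg_neg]

end MValg

namespace MVWrig

open MValg

variable {A : Type*} [MVWrig A]

lemma mul_le_mul_right' {a b : A} (h : le a b) (c : A) :
    le (mul a c) (mul b c) := by
  have hh := sub_mul_ge c a b
  unfold MValg.le at h
  rw [h, zero_mul] at hh
  exact le_zero_iff'.mp hh

lemma mul_le_mul_left' {a b : A} (h : le a b) (c : A) :
    le (mul c a) (mul c b) := by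
  have hh := mul_sub_ge c a b
  unfold MValg.le at h
  rw [h, mul_zero] at hh
  exact le_zero_iff'.mp hh

lemma osum_mul_le (l : List A) (b : A) :
    le (mul (osum l) b) (osum (l.map (fun t => mul t b))) := by
  induction l with
  | nil => simpa [osum, zero_mul] using le_refl' (zero : A)
  | cons t ts ih =>
    simp only [osum, List.map_cons]
    exact le_trans' (add_mul_le b t (osum ts))
      (add_le_add' (le_refl' (mul t b)) ih)

lemma nsmul_mul_le (n : ℕ) (s b : A) :
    le (mul (nsmul n s) b) (nsmul n (mul s b)) := by
  induction n with
  | zero => simpa [nsmul, zero_mul] using le_refl' (zero : A)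
  | succ n ih =>
    simp only [nsmul]
    exact le_trans' (add_mul_le b s (nsmul n s))
      (add_le_add' (le_refl' (mul s b)) ih)

lemma osum_replicate (n : ℕ) (x : A) : osum (List.replicate n x) = nsmul n x := by
  induction n with
  | zero => rfl
  | succ n ih => simp only [List.replicate, osum, nsmul, ih]

lemma osum_append (l m : List A) : osum (l ++ m) = MValg.add (osum l) (osum m) := by
  induction l with
  | nil => simp [osum, zero_add']
  | cons t ts ih =>
    show add t (osum (ts ++ m)) = add (add t (osum ts)) (osum m)
    rw [ih, MValg.add_assoc]

lemma genSet_downward {S : Set A} {x y : A} (h : le x y) (hy : y ∈ genSet S) :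
    x ∈ genSet S := by
  rcases hy with ⟨l, hl, hle⟩
  exact ⟨l, hl, le_trans' h hle⟩

lemma zero_mem_genSet (S : Set A) : (zero : A) ∈ genSet S :=
  ⟨[], by simp, le_refl' _⟩

lemma add_mem_genSet {S : Set A} {x y : A} (hx : x ∈ genSet S) (hy : y ∈ genSet S) :
    MValg.add x y ∈ genSet S := by
  rcases hx with ⟨l, hl, hxl⟩
  rcases hy with ⟨m, hm, hym⟩
  refine ⟨l ++ m, ?_, ?_⟩
  · intro t ht
    rcases List.mem_append.mp ht with h | h
    · exact hl t h
    · exact hm t h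
  · rw [osum_append]
    exact add_le_add' hxl hym

lemma osum_mem_genSet {S : Set A} {l : List A} (h : ∀ t ∈ l, t ∈ genSet S) :
    osum l ∈ genSet S := by
  induction l with
  | nil => exact zero_mem_genSet S
  | cons t ts ih =>
    exact add_mem_genSet (h t (by simp)) (ih fun u hu => h u (by simp [hu]))

end MVWrig

/-- In a commutative MVW-rig `A`, for `S ⊆ A` the set `⟨S⟩` above is an ideal of `A`
containing `S`, and it is the smallest such ideal. -/
theorem stmt_3 {A : Type*} [MVWrig A]
    (hcomm : ∀ x y : A, MVWrig.mul x y = MVWrig.mul y x) (S : Set A) :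
    MVWrig.IsIdeal (MVWrig.genSet S) ∧ S ⊆ MVWrig.genSet S ∧
      (∀ I : Set A, MVWrig.IsIdeal I → S ⊆ I → MVWrig.genSet S ⊆ I) := by
  open MValg MVWrig in
  refine ⟨⟨zero_mem_genSet S, ?_, fun a b ha hb => add_mem_genSet ha hb, ?_⟩, ?_, ?_⟩
  · intro a b hab hb
    exact genSet_downward hab hb
  · intro x b hx
    have key : MVWrig.mul x b ∈ genSet S := by
      rcases hx with ⟨l, hl, hxl⟩
      have h1 : le (MVWrig.mul x b) (osum (l.map (fun t => MVWrig.mul t b))) :=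
        le_trans' (mul_le_mul_right' hxl b) (osum_mul_le l b)
      refine genSet_downward h1 (osum_mem_genSet ?_)
      intro u hu
      rcases List.mem_map.mp hu with ⟨t, ht, rfl⟩
      rcases hl t ht with ⟨s, hs, ⟨a, rfl⟩ | ⟨n, rfl⟩⟩
      · -- (a·s)·b = (a·b)·s
        have he : MVWrig.mul (MVWrig.mul a s) b = MVWrig.mul (MVWrig.mul a b) s := by
          rw [MVWrig.mul_assoc, hcomm s b, MVWrig.mul_assoc]
        refine ⟨[MVWrig.mul (MVWrig.mul a b) s], ?_, ?_⟩
        · intro t ht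
          simp only [List.mem_singleton] at ht
          exact ⟨s, hs, Or.inl ⟨MVWrig.mul a b, ht⟩⟩
        · rw [he]
          simpa [osum, MValg.add_zero] using le_refl' (MVWrig.mul (MVWrig.mul a b) s)
      · -- (n•s)·b ≤ n•(s·b) = n•(b·s)
        refine ⟨List.replicate n (MVWrig.mul b s), ?_, ?_⟩
        · intro t ht
          rw [List.eq_of_mem_replicate ht]
          exact ⟨s, hs, Or.inl ⟨b, rfl⟩⟩
        · rw [osum_replicate, ← hcomm s b]
          exact nsmul_mul_le n s b
    refine ⟨key, ?_⟩
    rw [hcomm b x]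
    exact key
  · intro s hs
    refine ⟨[s], ?_, ?_⟩
    · intro t ht
      simp only [List.mem_singleton] at ht
      subst ht
      exact ⟨t, hs, Or.inr ⟨1, by simp [nsmul, MValg.add_zero]⟩⟩
    · simpa [osum, MValg.add_zero] using le_refl' s
  · rintro I ⟨hI0, hIdown, hIadd, hImul⟩ hSI x ⟨l, hl, hxl⟩
    have hns : ∀ (n : ℕ) (s : A), s ∈ I → nsmul n s ∈ I := by
      intro n s hsI
      induction n with
      | zero => exact hI0
      | succ n ihn => exact hIadd s (nsmul n s) hsI ihn
    have hosum : osum l ∈ I := by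
      clear hxl
      induction l with
      | nil => exact hI0
      | cons t ts ih =>
        refine hIadd t (osum ts) ?_ (ih fun u hu => hl u (by simp [hu]))
        rcases hl t (by simp) with ⟨s, hs, ⟨a, rfl⟩ | ⟨n, rfl⟩⟩
        · exact (hImul s a (hSI hs)).2
        · exact hns n s (hSI hs)
    exact hIdown x (osum l) hxl hosum
end

section
/- Let I be an ideal of an MVW-rig A and define x ≡_I y iff (x ⊖ y) ⊕ (y ⊖ x) ∈ I. Then ≡_I is a congruence for the MVW-rig structure; in particular it respects the product: if a ≡_I b and c ≡_I d then ac ≡_I bd. -/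
namespace MVAux

open MValg

variable {A : Type*} [MValg A]

lemma zero_add' (x : A) : add zero x = x := by rw [MValg.add_comm, MValg.add_zero]

lemma negzero_add (x : A) : add (neg zero) x = (neg zero : A) := by
  rw [MValg.add_comm, MValg.add_neg_zero]

lemma sup_comm (x y : A) : sup x y = sup y x := by
  show add (neg (add (neg x) y)) y = add (neg (add (neg y) x)) x
  exact MValg.mv6 x y

lemma neg_add_self (x : A) : add (neg x) x = (neg zero : A) := by
  have h := sup_comm x (neg zero)
  simp only [sup, sub, MValg.add_neg_zero, MValg.neg_neg, zero_add'] at h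
  exact h.symm

lemma sub_self (x : A) : sub x x = (zero : A) := by
  show neg (add (neg x) x) = (zero : A)
  rw [neg_add_self, MValg.neg_neg]

lemma le_refl' (x : A) : le x x := sub_self x

lemma le_add_right (x y : A) : le x (add x y) := by
  show neg (add (neg x) (add x y)) = (zero : A)
  rw [MValg.add_assoc, neg_add_self, negzero_add, MValg.neg_neg]

lemma le_zero_eq {x : A} (h : le x zero) : x = zero := by
  have : sub x zero = x := by
    show neg (add (neg x) zero) = x
    rw [MValg.add_zero, MValg.neg_neg]
  rw [← this]; exact h

lemma eq_add_sub {x y : A} (h : le x y) : y = add (sub y x) x := by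
  have h1 : sup x y = y := by
    show add (sub x y) y = y
    rw [h, zero_add']
  have h2 := sup_comm y x
  rw [h1] at h2
  exact h2.symm

lemma add_le_add_right {a b : A} (h : le a b) (c : A) :
    le (add a c) (add b c) := by
  have hb := eq_add_sub h
  rw [hb]
  have : add (add (sub b a) a) c = add (add a c) (sub b a) := by
    rw [← MValg.add_assoc, MValg.add_comm]
  rw [this]
  exact le_add_right _ _

lemma add_le_add_left {a b : A} (h : le a b) (c : A) :
    le (add c a) (add c b) := by
  rw [MValg.add_comm c a, MValg.add_comm c b]; exact add_le_add_right h c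

lemma sub_neg' (a b : A) : sub (neg b) (neg a) = sub a b := by
  show neg (add (neg (neg b)) (neg a)) = neg (add (neg a) b)
  rw [MValg.neg_neg, MValg.add_comm]

lemma neg_le_neg {a b : A} (h : le a b) : le (neg b) (neg a) := by
  show sub (neg b) (neg a) = zero
  rw [sub_neg']; exact h

lemma sub_le_sub_right {a b : A} (h : le a b) (c : A) :
    le (sub a c) (sub b c) := by
  have h2 := add_le_add_right (neg_le_neg h) c
  exact neg_le_neg h2

lemma le_trans' {a b c : A} (hab : le a b) (hbc : le b c) : le a c := by
  have h := sub_le_sub_right hab c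
  rw [hbc] at h
  exact le_zero_eq h

lemma sub_sub' (x y z : A) : sub (sub x y) z = sub x (add y z) := by
  show neg (add (neg (neg (add (neg x) y))) z) = neg (add (neg x) (add y z))
  rw [MValg.neg_neg, MValg.add_assoc]

lemma add_sub_self_le (a b : A) : le (sub (add a b) b) a := by
  show sub (sub (add a b) b) a = zero
  rw [sub_sub', MValg.add_comm b a, sub_self]

lemma le_sup' (x y : A) : le x (add (sub x y) y) := by
  have h := sup_comm x y
  show sub x (sup x y) = zero
  rw [h]
  show sub x (add (sub y x) x) = zero
  rw [MValg.add_comm]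
  exact le_add_right x (sub y x)

lemma sub_le_of_le_add {x y c : A} (h : le x (add y c)) : le (sub x c) y :=
  le_trans' (sub_le_sub_right h c) (add_sub_self_le y c)

lemma add_sub_distrib (a b c : A) :
    le (sub (add a b) c) (add a (sub b c)) := by
  apply sub_le_of_le_add
  have h1 : le (add a b) (add a (add (sub b c) c)) :=
    add_le_add_left (le_sup' b c) a
  rw [MValg.add_assoc] at h1
  exact h1

lemma sub_triangle (x y z : A) :
    le (sub x z) (add (sub x y) (sub y z)) := by
  have h2 := sub_le_sub_right (le_sup' x y) z
  exact le_trans' h2 (add_sub_distrib (sub x y) y z)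

lemma sub_add_le (a b c d : A) :
    le (sub (add a c) (add b d)) (add (sub a b) (sub c d)) := by
  have h0 : sub (add a c) (add b d) = sub (sub (add a c) b) d := by
    rw [sub_sub']
  have h1 : le (sub (add a c) b) (add (sub a b) c) := by
    have := add_sub_distrib c a b
    rw [MValg.add_comm c a, MValg.add_comm c (sub a b)] at this
    exact this
  have h2 := sub_le_sub_right h1 d
  rw [h0]
  exact le_trans' h2 (add_sub_distrib (sub a b) c d)

end MVAux

/-- For an ideal `I` of an MVW-rig `A`, the relation `x ≡_I y ↔ (x⊖y)⊕(y⊖x) ∈ I`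
is a congruence for the MVW-rig structure; in particular it respects the product. -/
theorem stmt_4 {A : Type*} [MVWrig A] (I : Set A) (hI : MVWrig.IsIdeal I) :
    MVWrig.IsCongruence (MVWrig.relI I) ∧
    (∀ a b c d : A, MVWrig.relI I a b → MVWrig.relI I c d →
      MVWrig.relI I (MVWrig.mul a c) (MVWrig.mul b d)) := by
  obtain ⟨hz, hdown, haddI, hmulI⟩ := hI
  -- characterization of relI
  have hchar : ∀ x y : A, MVWrig.relI I x y ↔
      (MValg.sub x y ∈ I ∧ MValg.sub y x ∈ I) := by
    intro x y
    constructor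
    · intro h
      constructor
      · exact hdown _ _ (MVAux.le_add_right _ _) h
      · refine hdown _ _ ?_ h
        rw [MValg.add_comm]
        exact MVAux.le_add_right _ _
    · intro ⟨h1, h2⟩
      exact haddI _ _ h1 h2
  have hrefl : ∀ x : A, MVWrig.relI I x x := by
    intro x
    rw [hchar]
    rw [MVAux.sub_self]
    exact ⟨hz, hz⟩
  have hsymm : ∀ {x y : A}, MVWrig.relI I x y → MVWrig.relI I y x := by
    intro x y h
    rw [hchar] at h ⊢
    exact ⟨h.2, h.1⟩
  have htrans : ∀ {x y z : A}, MVWrig.relI I x y → MVWrig.relI I y z →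
      MVWrig.relI I x z := by
    intro x y z h1 h2
    rw [hchar] at h1 h2 ⊢
    constructor
    · exact hdown _ _ (MVAux.sub_triangle x y z) (haddI _ _ h1.1 h2.1)
    · exact hdown _ _ (MVAux.sub_triangle z y x) (haddI _ _ h2.2 h1.2)
  have haddc : ∀ a b c d : A, MVWrig.relI I a b → MVWrig.relI I c d →
      MVWrig.relI I (MValg.add a c) (MValg.add b d) := by
    intro a b c d h1 h2
    rw [hchar] at h1 h2 ⊢
    constructor
    · exact hdown _ _ (MVAux.sub_add_le a b c d) (haddI _ _ h1.1 h2.1)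
    · exact hdown _ _ (MVAux.sub_add_le b a d c) (haddI _ _ h1.2 h2.2)
  have hnegc : ∀ a b : A, MVWrig.relI I a b →
      MVWrig.relI I (MValg.neg a) (MValg.neg b) := by
    intro a b h
    rw [hchar] at h ⊢
    rw [MVAux.sub_neg', MVAux.sub_neg']
    exact ⟨h.2, h.1⟩
  have hmulc : ∀ a b c d : A, MVWrig.relI I a b → MVWrig.relI I c d →
      MVWrig.relI I (MVWrig.mul a c) (MVWrig.mul b d) := by
    intro a b c d h1 h2
    have step1 : MVWrig.relI I (MVWrig.mul a c) (MVWrig.mul b c) := by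
      rw [hchar] at h1 ⊢
      constructor
      · exact hdown _ _ (MVWrig.sub_mul_ge c a b) (hmulI _ c h1.1).1
      · exact hdown _ _ (MVWrig.sub_mul_ge c b a) (hmulI _ c h1.2).1
    have step2 : MVWrig.relI I (MVWrig.mul b c) (MVWrig.mul b d) := by
      rw [hchar] at h2 ⊢
      constructor
      · exact hdown _ _ (MVWrig.mul_sub_ge b c d) (hmulI _ b h2.1).2
      · exact hdown _ _ (MVWrig.mul_sub_ge b d c) (hmulI _ b h2.2).2
    exact htrans step1 step2
  exact ⟨⟨⟨hrefl, hsymm, htrans⟩, haddc, hnegc, hmulc⟩, hmulc⟩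
end

section
/- Let φ : A → B be a homomorphism of MVW-rigs with kernel K = Ker(φ) = { x ∈ A : φ(x) = 0 }. Then the map φ̄ : A/K → φ(A) given by φ̄([a]_K) = φ(a) is a well-defined isomorphism of MVW-rigs between the quotient A/K and the image φ(A). -/
section Aux
open MValg

variable {A : Type*} [MValg A]

lemma aux_neg_add_self (x : A) : add (neg x) x = neg zero := by
  have h := MValg.mv6 x (neg zero)
  rw [MValg.add_neg_zero, MValg.neg_neg, MValg.add_comm zero x, MValg.add_zero] at h
  exact h.symm

lemma aux_sub_self (x : A) : sub x x = zero := by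
  unfold sub
  rw [aux_neg_add_self, MValg.neg_neg]

lemma aux_add_eq_zero_left {x y : A} (h : add x y = zero) : x = zero := by
  have h1 : sub x (add x y) = zero := by
    unfold sub
    rw [MValg.add_assoc, aux_neg_add_self, MValg.add_comm, MValg.add_neg_zero, MValg.neg_neg]
  rw [h] at h1
  unfold sub at h1
  rw [MValg.add_zero, MValg.neg_neg] at h1
  exact h1

lemma aux_antisymm {x y : A} (hxy : sub x y = zero) (hyx : sub y x = zero) : x = y := by
  have h := MValg.mv6 x y
  have hxy' : neg (neg (add (neg x) y)) = neg zero := by rw [show neg (add (neg x) y) = zero from hxy]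
  rw [MValg.neg_neg] at hxy'
  unfold sub at hxy hyx
  rw [hxy, hyx, MValg.add_comm zero y, MValg.add_zero, MValg.add_comm zero x, MValg.add_zero] at h
  exact h.symm

end Aux

open MValg MVWrig in
/-- First isomorphism theorem for MVW-rigs: a homomorphism `φ : A → B` with kernel
`K` descends to a well-defined map `φ̄` on the quotient `A/K` (the quotient of `A` by
the congruence `≡_K`), `φ̄([a]_K) = φ(a)`, which is an isomorphism of MVW-rigs onto
the image `φ(A)`: it is injective, has range `φ(A)`, and preserves the quotient
operations `[x]⊕[y] = [x⊕y]`, `¬[x] = [¬x]`, `[x][y] = [xy]`. -/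
theorem stmt_6 {A B : Type*} [MVWrig A] [MVWrig B] (φ : A → B) (hφ : MVWrig.IsHom φ) :
    ∃ φbar : Quot (MVWrig.relI {x : A | φ x = MValg.zero}) → B,
      (∀ a : A, φbar (Quot.mk _ a) = φ a) ∧
      Function.Injective φbar ∧
      Set.range φbar = Set.range φ ∧
      (∀ a b : A, φbar (Quot.mk _ (add a b)) = add (φbar (Quot.mk _ a)) (φbar (Quot.mk _ b))) ∧
      (∀ a : A, φbar (Quot.mk _ (neg a)) = neg (φbar (Quot.mk _ a))) ∧
      (∀ a b : A, φbar (Quot.mk _ (mul a b)) = mul (φbar (Quot.mk _ a)) (φbar (Quot.mk _ b))) ∧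
      φbar (Quot.mk _ MValg.zero) = MValg.zero := by
  obtain ⟨h0, hadd, hneg, hmul⟩ := hφ
  have hsub : ∀ x y : A, φ (sub x y) = sub (φ x) (φ y) := by
    intro x y; unfold MValg.sub; rw [hneg, hadd, hneg]
  -- well-definedness
  have hresp : ∀ a b : A, relI {x : A | φ x = MValg.zero} a b → φ a = φ b := by
    intro a b hab
    have h : add (φ (sub a b)) (φ (sub b a)) = zero := by
      rw [← hadd]; exact hab
    have h1 : φ (sub a b) = zero := aux_add_eq_zero_left h
    have h2 : φ (sub b a) = zero := aux_add_eq_zero_left (by rwa [MValg.add_comm] at h)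
    rw [hsub] at h1 h2
    exact aux_antisymm h1 h2
  refine ⟨Quot.lift φ hresp, fun a => rfl, ?_, ?_, fun a b => hadd a b,
    fun a => hneg a, fun a b => hmul a b, h0⟩
  · intro x y
    induction x using Quot.ind
    induction y using Quot.ind
    rename_i a b
    intro h
    apply Quot.sound
    show add (sub a b) (sub b a) ∈ _
    have h' : φ a = φ b := h
    show φ (add (sub a b) (sub b a)) = zero
    rw [hadd, hsub, hsub, h', aux_sub_self, MValg.add_zero]
  · ext b
    constructor
    · rintro ⟨x, rfl⟩
      induction x using Quot.ind
      rename_i a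
      exact ⟨a, rfl⟩
    · rintro ⟨a, rfl⟩
      exact ⟨Quot.mk _ a, rfl⟩
end

section
/- Let A and B be MVW-rigs, f : A → B a homomorphism of MVW-rigs, and P a prime ideal of B. Then f⁻¹(P) = { a ∈ A : f(a) ∈ P } is a prime ideal of A. -/
/-- The preimage of a prime ideal under a homomorphism of MVW-rigs is a prime ideal. -/
theorem stmt_8 {A B : Type*} [MVWrig A] [MVWrig B] (f : A → B) (hf : MVWrig.IsHom f)
    (P : Set B) (hP : MVWrig.IsPrimeIdeal P) :
    MVWrig.IsPrimeIdeal {a : A | f a ∈ P} := by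
  obtain ⟨h0, hadd, hneg, hmul⟩ := hf
  obtain ⟨⟨hz, hdc, hplus, habs⟩, hpr⟩ := hP
  have hsub : ∀ x y : A, f (MValg.sub x y) = MValg.sub (f x) (f y) := by
    intro x y
    simp [MValg.sub, hadd, hneg]
  refine ⟨⟨?_, ?_, ?_, ?_⟩, ?_⟩
  · simpa [h0] using hz
  · intro a b hle hb
    exact hdc (f a) (f b) (by rw [MValg.le, ← hsub, show MValg.sub a b = MValg.zero from hle, h0]) hb
  · intro a b ha hb
    simpa [hadd] using hplus _ _ ha hb
  · intro a b ha
    constructor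
    · simpa [hmul] using (habs (f a) (f b) ha).1
    · simpa [hmul] using (habs (f a) (f b) ha).2
  · intro a b hab
    exact hpr (f a) (f b) (by simpa [hmul] using hab)
end

section
/- In a commutative MVW-rig A with unitary element 1, every maximal ideal is a prime ideal. -/
/-- In a commutative MVW-rig with unitary element `1`, every maximal ideal
(`⟨M ∪ {a}⟩ = A` for every `a ∉ M`) is a prime ideal. -/
theorem stmt_10 {A : Type*} [MVWrig A]
    (hcomm : ∀ x y : A, MVWrig.mul x y = MVWrig.mul y x)
    (one : A) (hone : ∀ x : A, MVWrig.mul one x = x ∧ MVWrig.mul x one = x)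
    (M : Set A) (hM : MVWrig.IsIdeal M)
    (hmax : ∀ a : A, a ∉ M → MVWrig.genIdeal (M ∪ {a}) = Set.univ) :
    MVWrig.IsPrimeIdeal M := by
  have le_zero : ∀ x : A, MValg.le x MValg.zero → x = MValg.zero := by
    intro x hx
    unfold MValg.le MValg.sub at hx
    rwa [MValg.add_zero, MValg.neg_neg] at hx
  refine ⟨hM, ?_⟩
  intro a b hab
  by_cases ha : a ∈ M
  · exact Or.inl ha
  · right
    obtain ⟨hM0, hMdown, hMadd, hMmul⟩ := hM
    set J : Set A := {x | MVWrig.mul x b ∈ M} with hJ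
    have hJideal : MVWrig.IsIdeal J := by
      refine ⟨?_, ?_, ?_, ?_⟩
      · show MVWrig.mul MValg.zero b ∈ M
        rw [MVWrig.zero_mul]; exact hM0
      · intro x y hxy hy
        have h1 : MValg.le (MValg.sub (MVWrig.mul x b) (MVWrig.mul y b))
            (MVWrig.mul (MValg.sub x y) b) := MVWrig.sub_mul_ge b x y
        rw [hxy, MVWrig.zero_mul] at h1
        have h2 : MValg.le (MVWrig.mul x b) (MVWrig.mul y b) := le_zero _ h1
        exact hMdown _ _ h2 hy
      · intro x y hx hy
        have h1 : MValg.le (MVWrig.mul (MValg.add x y) b)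
            (MValg.add (MVWrig.mul x b) (MVWrig.mul y b)) := MVWrig.add_mul_le b x y
        exact hMdown _ _ h1 (hMadd _ _ hx hy)
      · intro x c hx
        constructor
        · show MVWrig.mul (MVWrig.mul x c) b ∈ M
          rw [MVWrig.mul_assoc, hcomm c b, ← MVWrig.mul_assoc]
          exact (hMmul _ c hx).1
        · show MVWrig.mul (MVWrig.mul c x) b ∈ M
          rw [MVWrig.mul_assoc]
          exact (hMmul _ c hx).2
    have hsub : (M ∪ {a}) ⊆ J := by
      intro x hx
      rcases hx with hx | hx
      · exact (hMmul _ b hx).1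
      · rcases hx with rfl
        exact hab
    have hgen : MVWrig.genIdeal (M ∪ {a}) ⊆ J := by
      intro x hx
      exact hx J ⟨hJideal, hsub⟩
    have h1 : one ∈ J := by
      apply hgen
      rw [hmax a ha]
      trivial
    have : MVWrig.mul one b ∈ M := h1
    rwa [(hone b).1] at this
end

section
/- Let A be a commutative MVW-rig and N = { x ∈ A : x^n = 0 for some n > 0 } its nilradical. Then N is an ideal of A, and the quotient MVW-rig A/N has no nilpotent elements other than zero: if [x]_N^m = [0]_N for some m > 0 then [x]_N = [0]_N. -/
namespace MVnil

open MValg MVWrig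

variable {A : Type*} [MVWrig A]

lemma zero_add' (x : A) : add zero x = x := by
  rw [MValg.add_comm, MValg.add_zero]

lemma neg_add_self (y : A) : add (neg y) y = neg zero := by
  have h := MValg.mv6 (neg zero : A) y
  rw [MValg.neg_neg, zero_add', MValg.add_neg_zero] at h
  exact h

lemma sub_zero' (x : A) : sub x zero = x := by
  unfold MValg.sub; rw [MValg.add_zero, MValg.neg_neg]

lemma zero_sub' (x : A) : sub zero x = zero := by
  unfold MValg.sub
  rw [MValg.add_comm, MValg.add_neg_zero, MValg.neg_neg]

lemma le_refl' (x : A) : le x x := by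
  show sub x x = zero
  unfold MValg.sub
  rw [neg_add_self, MValg.neg_neg]

lemma le_zero' {x : A} (h : le x zero) : x = zero := by
  have : sub x zero = zero := h
  rwa [sub_zero'] at this

lemma le_add_right (x z : A) : le x (add x z) := by
  show sub x (add x z) = zero
  unfold MValg.sub
  rw [MValg.add_assoc, neg_add_self, MValg.add_comm, MValg.add_neg_zero, MValg.neg_neg]

lemma exists_add_of_le {x y : A} (h : le x y) : ∃ c, y = add x c := by
  have h6 := MValg.mv6 x y
  have hx : sub x y = zero := h
  unfold MValg.sub at hx
  rw [hx, zero_add'] at h6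
  exact ⟨neg (add (neg y) x), by rw [MValg.add_comm]; exact h6⟩

lemma le_trans' {x y z : A} (h1 : le x y) (h2 : le y z) : le x z := by
  obtain ⟨c, rfl⟩ := exists_add_of_le h1
  obtain ⟨d, rfl⟩ := exists_add_of_le h2
  rw [← MValg.add_assoc]
  exact le_add_right _ _

lemma add_le_add' {a b c d : A} (h1 : le a b) (h2 : le c d) :
    le (add a c) (add b d) := by
  obtain ⟨w, rfl⟩ := exists_add_of_le h1
  obtain ⟨v, rfl⟩ := exists_add_of_le h2
  have : add (add a w) (add c v) = add (add a c) (add w v) := by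
    rw [MValg.add_assoc, MValg.add_assoc]
    congr 1
    rw [← MValg.add_assoc, ← MValg.add_assoc, MValg.add_comm w c]
  rw [this]
  exact le_add_right _ _

lemma mul_le_mul_right' {a b : A} (c : A) (h : le a b) :
    le (mul a c) (mul b c) := by
  have h2 := MVWrig.sub_mul_ge c a b
  have hs : sub a b = zero := h
  rw [hs, MVWrig.zero_mul] at h2
  exact le_zero' h2

lemma mul_le_mul' (hcomm : ∀ x y : A, mul x y = mul y x)
    {a b c d : A} (h1 : le a b) (h2 : le c d) : le (mul a c) (mul b d) := by
  refine le_trans' (mul_le_mul_right' c h1) ?_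
  rw [hcomm b c, hcomm b d]
  exact mul_le_mul_right' b h2

lemma pow_succ' (x : A) (n : ℕ) : pow x (n + 1) = mul (pow x n) x := rfl

lemma pow_add' (x : A) (i j : ℕ) :
    mul (pow x i) (pow x j) = pow x (i + j + 1) := by
  induction j with
  | zero => rfl
  | succ j ih =>
    rw [pow_succ', ← MVWrig.mul_assoc, ih]
    rfl

lemma pow_pow' (x : A) (m n : ℕ) :
    pow (pow x m) n = pow x (m + n * (m + 1)) := by
  induction n with
  | zero => rw [Nat.zero_mul, Nat.add_zero]; rfl
  | succ n ih =>
    rw [pow_succ', ih, pow_add']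
    congr 1
    ring

lemma pow_eq_zero_of_add (x : A) (n k : ℕ) (h : pow x n = zero) :
    pow x (n + k) = zero := by
  induction k with
  | zero => exact h
  | succ k ih =>
    rw [show n + (k+1) = (n+k) + 1 by ring, pow_succ', ih, MVWrig.zero_mul]

lemma pow_le_pow (hcomm : ∀ x y : A, mul x y = mul y x)
    {a b : A} (h : le a b) (n : ℕ) : le (pow a n) (pow b n) := by
  induction n with
  | zero => exact h
  | succ n ih => exact mul_le_mul' hcomm ih h

lemma pow_mul' (hcomm : ∀ x y : A, mul x y = mul y x) (a b : A) (n : ℕ) :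
    pow (mul a b) n = mul (pow a n) (pow b n) := by
  induction n with
  | zero => rfl
  | succ n ih =>
    rw [pow_succ', ih, pow_succ', pow_succ']
    rw [MVWrig.mul_assoc, MVWrig.mul_assoc]
    congr 1
    rw [← MVWrig.mul_assoc, ← MVWrig.mul_assoc, hcomm (pow b n) a]

/-- Sum of a list. -/
def sumL : List A → A
  | [] => zero
  | x :: l => add x (sumL l)

lemma sumL_append (L1 L2 : List A) :
    sumL (L1 ++ L2) = add (sumL L1) (sumL L2) := by
  induction L1 with
  | nil => simp [sumL, zero_add']
  | cons x l ih => simp [sumL, ih, MValg.add_assoc]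

lemma sumL_zero {L : List A} (h : ∀ x ∈ L, x = zero) : sumL L = zero := by
  induction L with
  | nil => rfl
  | cons x l ih =>
    rw [sumL, h x (by simp), ih (fun y hy => h y (by simp [hy])), MValg.add_zero]

lemma sumL_mul_le (L : List A) (c : A) :
    le (mul (sumL L) c) (sumL (L.map (fun x => mul x c))) := by
  induction L with
  | nil =>
    show le (mul zero c) _
    rw [MVWrig.zero_mul]
    exact le_refl' _
  | cons x l ih =>
    refine le_trans' (MVWrig.add_mul_le c x (sumL l)) ?_
    exact add_le_add' (le_refl' _) ih

section NF

variable (a b : A)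

/-- Normal form `a^i · b^j` (exponents counted with multiplicity `i + j ≥ 1`). -/
def nf : ℕ → ℕ → A
  | 0, 0 => zero
  | i + 1, 0 => pow a i
  | 0, j + 1 => pow b j
  | i + 1, j + 1 => mul (pow a i) (pow b j)

variable {a b}

lemma mulnf_a (hcomm : ∀ x y : A, mul x y = mul y x) {i j : ℕ} (h : 1 ≤ i + j) :
    mul (nf a b i j) a = nf a b (i + 1) j := by
  match i, j with
  | 0, 0 => omega
  | i + 1, 0 => rfl
  | 0, j + 1 =>
    show mul (pow b j) a = mul (pow a 0) (pow b j)
    exact hcomm _ _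
  | i + 1, j + 1 =>
    show mul (mul (pow a i) (pow b j)) a = mul (pow a (i+1)) (pow b j)
    rw [MVWrig.mul_assoc, hcomm (pow b j) a, ← MVWrig.mul_assoc]
    rfl

lemma mulnf_b {i j : ℕ} (h : 1 ≤ i + j) :
    mul (nf a b i j) b = nf a b i (j + 1) := by
  match i, j with
  | 0, 0 => omega
  | i + 1, 0 => rfl
  | 0, j + 1 => rfl
  | i + 1, j + 1 =>
    show mul (mul (pow a i) (pow b j)) b = mul (pow a i) (pow b (j+1))
    rw [MVWrig.mul_assoc]
    rfl

lemma expand (hcomm : ∀ x y : A, mul x y = mul y x) (k : ℕ) :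
    ∃ L : List (ℕ × ℕ), (∀ p ∈ L, p.1 + p.2 = k + 1) ∧
      le (pow (add a b) k) (sumL (L.map (fun p => nf a b p.1 p.2))) := by
  induction k with
  | zero =>
    refine ⟨[(1, 0), (0, 1)], by simp, ?_⟩
    show le (add a b) (sumL [a, b])
    show le (add a b) (add a (add b zero))
    rw [MValg.add_zero]
    exact le_refl' _
  | succ k ih =>
    obtain ⟨L, hdeg, hle⟩ := ih
    refine ⟨(L.map fun p => (p.1 + 1, p.2)) ++ (L.map fun p => (p.1, p.2 + 1)),
      ?_, ?_⟩
    · intro p hp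
      simp only [List.mem_append, List.mem_map] at hp
      rcases hp with ⟨q, hq, rfl⟩ | ⟨q, hq, rfl⟩ <;>
        have := hdeg q hq <;> simp <;> omega
    · set M : List A := L.map (fun p => nf a b p.1 p.2) with hM
      have step1 : le (pow (add a b) (k + 1)) (mul (sumL M) (add a b)) := by
        rw [pow_succ']
        exact mul_le_mul_right' _ hle
      have step2 : le (mul (sumL M) (add a b))
          (add (mul (sumL M) a) (mul (sumL M) b)) :=
        MVWrig.mul_add_le _ _ _
      have step3 : le (add (mul (sumL M) a) (mul (sumL M) b))
          (add (sumL (M.map (fun x => mul x a))) (sumL (M.map (fun x => mul x b)))) :=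
        add_le_add' (sumL_mul_le M a) (sumL_mul_le M b)
      have hma : M.map (fun x => mul x a)
          = (L.map fun p => (p.1 + 1, p.2)).map (fun p => nf a b p.1 p.2) := by
        rw [hM, List.map_map, List.map_map]
        refine List.map_congr_left (fun q hq => ?_)
        have := hdeg q hq
        exact mulnf_a hcomm (by omega)
      have hmb : M.map (fun x => mul x b)
          = (L.map fun p => (p.1, p.2 + 1)).map (fun p => nf a b p.1 p.2) := by
        rw [hM, List.map_map, List.map_map]
        refine List.map_congr_left (fun q hq => ?_)
        have := hdeg q hq
        exact mulnf_b (by omega)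
      rw [List.map_append, sumL_append, ← hma, ← hmb]
      exact le_trans' step1 (le_trans' step2 step3)

lemma pow_zero_of_le {x : A} {n k : ℕ} (h : pow x n = zero) (hk : n ≤ k) :
    pow x k = zero := by
  have := pow_eq_zero_of_add x n (k - n) h
  rwa [show n + (k - n) = k by omega] at this

lemma nil_add (hcomm : ∀ x y : A, mul x y = mul y x) {na nb : ℕ}
    (ha : pow a na = zero) (hb : pow b nb = zero) :
    pow (add a b) (na + nb + 1) = zero := by
  obtain ⟨L, hdeg, hle⟩ := expand (a := a) (b := b) hcomm (na + nb + 1)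
  have hz : sumL (L.map (fun p => nf a b p.1 p.2)) = zero := by
    refine sumL_zero ?_
    intro x hx
    simp only [List.mem_map] at hx
    obtain ⟨⟨i0, j0⟩, hq, rfl⟩ := hx
    have hdq : i0 + j0 = na + nb + 2 := hdeg _ hq
    rcases i0 with _ | i <;> rcases j0 with _ | j
    · omega
    · show pow b j = zero
      exact pow_zero_of_le hb (by omega)
    · show pow a i = zero
      exact pow_zero_of_le ha (by omega)
    · show mul (pow a i) (pow b j) = zero
      rcases Nat.lt_or_ge i na with h1 | h1
      · rw [pow_zero_of_le hb (by omega), MVWrig.mul_zero]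
      · rw [pow_zero_of_le ha h1, MVWrig.zero_mul]
  rw [hz] at hle
  exact le_zero' hle

end NF

end MVnil

open MVWrig in
/-- The nilradical `N = {x | xⁿ = 0 for some n > 0}` of a commutative MVW-rig is an
ideal, and the quotient `A/N` has no nonzero nilpotent elements: if `[x]^m = [0]_N`
for some `m > 0` (i.e. `x^m ≡_N 0`, since `[x]^m = [x^m]`), then `[x]_N = [0]_N`
(i.e. `x ≡_N 0`). Here `pow x n = x^(n+1)` ranges over all exponents `≥ 1`. -/
theorem stmt_11 {A : Type*} [MVWrig A]
    (hcomm : ∀ x y : A, MVWrig.mul x y = MVWrig.mul y x) :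
    IsIdeal {x : A | ∃ n : ℕ, pow x n = MValg.zero} ∧
    (∀ (x : A) (m : ℕ),
      relI {y : A | ∃ n : ℕ, pow y n = MValg.zero} (pow x m) MValg.zero →
      relI {y : A | ∃ n : ℕ, pow y n = MValg.zero} x MValg.zero) := by
  constructor
  · refine ⟨⟨0, rfl⟩, ?_, ?_, ?_⟩
    · rintro a b hab ⟨n, hn⟩
      have h := MVnil.pow_le_pow hcomm hab n
      rw [hn] at h
      exact ⟨n, MVnil.le_zero' h⟩
    · rintro a b ⟨na, ha⟩ ⟨nb, hb⟩
      exact ⟨na + nb + 1, MVnil.nil_add hcomm ha hb⟩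
    · rintro a b ⟨n, ha⟩
      constructor
      · exact ⟨n, by rw [MVnil.pow_mul' hcomm, ha, MVWrig.zero_mul]⟩
      · exact ⟨n, by rw [MVnil.pow_mul' hcomm, ha, MVWrig.mul_zero]⟩
  · intro x m h
    unfold MVWrig.relI at h ⊢
    rw [MVnil.sub_zero', MVnil.zero_sub', MValg.add_zero] at h ⊢
    simp only [Set.mem_setOf_eq] at h ⊢
    obtain ⟨n, hn⟩ := h
    rw [MVnil.pow_pow'] at hn
    exact ⟨_, hn⟩
end

section
/- Let A be a commutative MVW-rig with unitary element and a,b ∈ A. Then V(a) ⊆ V(b) if and only if √⟨b⟩ ⊆ √⟨a⟩, where V(x) = { P prime ideal of A : x ∈ P }, ⟨x⟩ is the ideal generated by {x}, and √I = { y ∈ A : y^n ∈ I for some n > 0 }. -/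
/-- The prime spectrum of an MVW-rig: the set of its prime ideals. -/
abbrev MVSpec (A : Type*) [MVWrig A] := {P : Set A // MVWrig.IsPrimeIdeal P}

/-- Basic sets `V(a) = {P ∈ Spec A | a ∈ P}` of the co-Zariski topology. -/
def Vset {A : Type*} [MVWrig A] (a : A) : Set (MVSpec A) := {P : MVSpec A | a ∈ P.val}

section Aux

variable {A : Type*} [MVWrig A]

private lemma mvw_zero_add (x : A) : MValg.add MValg.zero x = x := by
  rw [MValg.add_comm, MValg.add_zero]

private lemma mvw_neg_add (x : A) :
    MValg.add (MValg.neg x) x = MValg.neg MValg.zero := by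
  have h := MValg.mv6 x (MValg.neg (MValg.zero (A := A)))
  have e1 : MValg.add (MValg.neg x) (MValg.neg (MValg.zero (A := A))) = MValg.neg MValg.zero :=
    MValg.add_neg_zero _
  rw [e1, MValg.neg_neg] at h
  rw [mvw_zero_add x] at h
  rw [mvw_zero_add] at h
  exact h.symm

private lemma mvw_add_four (p q r s : A) :
    MValg.add (MValg.add p q) (MValg.add r s) = MValg.add (MValg.add p r) (MValg.add q s) := by
  calc MValg.add (MValg.add p q) (MValg.add r s)
      = MValg.add (MValg.add (MValg.add p q) r) s := MValg.add_assoc _ _ _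
    _ = MValg.add (MValg.add p (MValg.add q r)) s := by rw [← MValg.add_assoc p q r]
    _ = MValg.add (MValg.add p (MValg.add r q)) s := by rw [MValg.add_comm q r]
    _ = MValg.add (MValg.add (MValg.add p r) q) s := by rw [MValg.add_assoc p r q]
    _ = MValg.add (MValg.add p r) (MValg.add q s) := (MValg.add_assoc _ _ _).symm

private lemma mvw_le_iff_exists {x y : A} : MValg.le x y ↔ ∃ z, y = MValg.add x z := by
  constructor
  · intro h
    refine ⟨MValg.sub y x, ?_⟩
    have h6 : MValg.add (MValg.sub x y) y = MValg.add (MValg.sub y x) x := MValg.mv6 x y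
    have h' : MValg.sub x y = MValg.zero := h
    rw [h', mvw_zero_add] at h6
    exact h6.trans (MValg.add_comm _ _)
  · rintro ⟨z, rfl⟩
    show MValg.neg (MValg.add (MValg.neg x) (MValg.add x z)) = MValg.zero
    rw [MValg.add_assoc, mvw_neg_add, MValg.add_comm (MValg.neg MValg.zero) z,
      MValg.add_neg_zero, MValg.neg_neg]

private lemma mvw_le_refl (x : A) : MValg.le x x :=
  mvw_le_iff_exists.2 ⟨MValg.zero, (MValg.add_zero x).symm⟩

private lemma mvw_le_trans {x y z : A} (h1 : MValg.le x y) (h2 : MValg.le y z) :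
    MValg.le x z := by
  obtain ⟨u, rfl⟩ := mvw_le_iff_exists.1 h1
  obtain ⟨v, rfl⟩ := mvw_le_iff_exists.1 h2
  exact mvw_le_iff_exists.2 ⟨MValg.add u v, (MValg.add_assoc x u v).symm⟩

private lemma mvw_le_zero_iff {x : A} : MValg.le x MValg.zero ↔ x = MValg.zero := by
  show MValg.neg (MValg.add (MValg.neg x) MValg.zero) = MValg.zero ↔ _
  rw [MValg.add_zero, MValg.neg_neg]

private lemma mvw_add_le_add {x y z w : A} (h1 : MValg.le x y) (h2 : MValg.le z w) :
    MValg.le (MValg.add x z) (MValg.add y w) := by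
  obtain ⟨u, rfl⟩ := mvw_le_iff_exists.1 h1
  obtain ⟨v, rfl⟩ := mvw_le_iff_exists.1 h2
  exact mvw_le_iff_exists.2 ⟨MValg.add u v, mvw_add_four x u z v⟩

private lemma mvw_mul_le_mul_left {x y : A} (c : A) (h : MValg.le x y) :
    MValg.le (MVWrig.mul c x) (MVWrig.mul c y) := by
  have hd := MVWrig.mul_sub_ge c x y
  have h' : MValg.sub x y = MValg.zero := h
  rw [h', MVWrig.mul_zero] at hd
  exact mvw_le_zero_iff.1 hd

/-- finite sums of multiples of `u` -/
private def sumU (u : A) : List A → A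
  | [] => MValg.zero
  | c :: l => MValg.add (MVWrig.mul c u) (sumU u l)

private lemma mvw_mul_sumU_le (t u : A) (l : List A) :
    MValg.le (MVWrig.mul t (sumU u l)) (sumU u (l.map (fun c => MVWrig.mul t c))) := by
  induction l with
  | nil =>
      show MValg.le (MVWrig.mul t MValg.zero) _
      rw [MVWrig.mul_zero]
      exact mvw_le_refl _
  | cons c l ih =>
      have h1 := MVWrig.mul_add_le t (MVWrig.mul c u) (sumU u l)
      refine mvw_le_trans h1 ?_
      show MValg.le _ (MValg.add (MVWrig.mul (MVWrig.mul t c) u) (sumU u _))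
      rw [MVWrig.mul_assoc]
      exact mvw_add_le_add (mvw_le_refl _) ih

private lemma mvw_sumU_append (u : A) (l1 l2 : List A) :
    sumU u (l1 ++ l2) = MValg.add (sumU u l1) (sumU u l2) := by
  induction l1 with
  | nil => show sumU u l2 = MValg.add MValg.zero (sumU u l2); rw [mvw_zero_add]
  | cons c l ih =>
      show MValg.add (MVWrig.mul c u) (sumU u (l ++ l2)) = _
      rw [ih, MValg.add_assoc]
      rfl

/-- the ideal generated by an ideal `P` together with an element `u` -/
private def Jset (P : Set A) (u : A) : Set A :=
  {x | ∃ p ∈ P, ∃ l : List A, MValg.le x (MValg.add p (sumU u l))}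

private lemma mvw_mem_Jset_of_mem {P : Set A} {u : A} {p : A} (hp : p ∈ P) : p ∈ Jset P u :=
  ⟨p, hp, [], by
    show MValg.le p (MValg.add p MValg.zero)
    rw [MValg.add_zero]; exact mvw_le_refl _⟩

private lemma mvw_ideal_down {P : Set A} (h : MVWrig.IsIdeal P) {x y : A}
    (hle : MValg.le x y) (hy : y ∈ P) : x ∈ P := h.2.1 x y hle hy

private lemma mvw_ideal_add {P : Set A} (h : MVWrig.IsIdeal P) {x y : A}
    (hx : x ∈ P) (hy : y ∈ P) : MValg.add x y ∈ P := h.2.2.1 x y hx hy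

private lemma mvw_ideal_mul {P : Set A} (h : MVWrig.IsIdeal P) {x : A} (hx : x ∈ P) (c : A) :
    MVWrig.mul x c ∈ P ∧ MVWrig.mul c x ∈ P := h.2.2.2 x c hx

private lemma mvw_Jset_isIdeal {P : Set A} (hP : MVWrig.IsIdeal P)
    (hcomm : ∀ x y : A, MVWrig.mul x y = MVWrig.mul y x) (u : A) :
    MVWrig.IsIdeal (Jset P u) := by
  refine ⟨mvw_mem_Jset_of_mem hP.1, ?_, ?_, ?_⟩
  · rintro x y hxy ⟨p, hp, l, hl⟩
    exact ⟨p, hp, l, mvw_le_trans hxy hl⟩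
  · rintro x y ⟨p, hp, l, hl⟩ ⟨q, hq, m, hm⟩
    refine ⟨MValg.add p q, mvw_ideal_add hP hp hq, l ++ m, ?_⟩
    have h2 := mvw_add_le_add hl hm
    rw [mvw_add_four] at h2
    rw [mvw_sumU_append]
    exact h2
  · rintro x c ⟨p, hp, l, hl⟩
    have key : MVWrig.mul c x ∈ Jset P u := by
      refine ⟨MVWrig.mul c p, (mvw_ideal_mul hP hp c).2, l.map (fun d => MVWrig.mul c d), ?_⟩
      refine mvw_le_trans (mvw_mul_le_mul_left c hl) ?_
      refine mvw_le_trans (MVWrig.mul_add_le c p (sumU u l)) ?_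
      exact mvw_add_le_add (mvw_le_refl _) (mvw_mul_sumU_le c u l)
    constructor
    · rw [hcomm]; exact key
    · exact key

private lemma mvw_u_mem_Jset {P : Set A} (hP : MVWrig.IsIdeal P) (one : A)
    (hone : ∀ x : A, MVWrig.mul one x = x ∧ MVWrig.mul x one = x) (u : A) :
    u ∈ Jset P u := by
  refine ⟨MValg.zero, hP.1, [one], ?_⟩
  show MValg.le u (MValg.add MValg.zero (MValg.add (MVWrig.mul one u) MValg.zero))
  rw [(hone u).1, MValg.add_zero, mvw_zero_add]
  exact mvw_le_refl _

private lemma mvw_mul_sumU_mem {P : Set A} (hP : MVWrig.IsIdeal P)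
    (hcomm : ∀ x y : A, MVWrig.mul x y = MVWrig.mul y x)
    {t v : A} (htv : MVWrig.mul t v ∈ P) (l : List A) :
    MVWrig.mul t (sumU v l) ∈ P := by
  induction l with
  | nil =>
      have : MVWrig.mul t (sumU v []) = MValg.zero := MVWrig.mul_zero t
      rw [this]; exact hP.1
  | cons d l ih =>
      refine mvw_ideal_down hP (MVWrig.mul_add_le t (MVWrig.mul d v) (sumU v l)) ?_
      refine mvw_ideal_add hP ?_ ih
      have : MVWrig.mul t (MVWrig.mul d v) = MVWrig.mul d (MVWrig.mul t v) := by
        rw [← MVWrig.mul_assoc, hcomm t d, MVWrig.mul_assoc]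
      rw [this]
      exact (mvw_ideal_mul hP htv d).2

private lemma mvw_mul_mem_of_mul_mem {P : Set A} (hP : MVWrig.IsIdeal P)
    (hcomm : ∀ x y : A, MVWrig.mul x y = MVWrig.mul y x)
    {t v : A} (htv : MVWrig.mul t v ∈ P) {z : A} (hz : z ∈ Jset P v) :
    MVWrig.mul t z ∈ P := by
  obtain ⟨q, hq, m, hm⟩ := hz
  refine mvw_ideal_down hP (mvw_mul_le_mul_left t hm) ?_
  refine mvw_ideal_down hP (MVWrig.mul_add_le t q (sumU v m)) ?_
  exact mvw_ideal_add hP (mvw_ideal_mul hP hq t).2 (mvw_mul_sumU_mem hP hcomm htv m)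

private lemma mvw_key_mul_mem {P : Set A} (hP : MVWrig.IsIdeal P)
    (hcomm : ∀ x y : A, MVWrig.mul x y = MVWrig.mul y x)
    {u v : A} (huv : MVWrig.mul u v ∈ P)
    {w z : A} (hw : w ∈ Jset P u) (hz : z ∈ Jset P v) : MVWrig.mul w z ∈ P := by
  obtain ⟨p, hp, l, hl⟩ := hw
  rw [hcomm]
  refine mvw_ideal_down hP (mvw_mul_le_mul_left z hl) ?_
  refine mvw_ideal_down hP (MVWrig.mul_add_le z p (sumU u l)) ?_
  refine mvw_ideal_add hP (mvw_ideal_mul hP hp z).2 ?_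
  have hzu : MVWrig.mul z u ∈ P := by
    rw [hcomm]
    exact mvw_mul_mem_of_mul_mem hP hcomm huv hz
  exact mvw_mul_sumU_mem hP hcomm hzu l

private lemma mvw_genIdeal_isIdeal (S : Set A) : MVWrig.IsIdeal (MVWrig.genIdeal S) := by
  refine ⟨?_, ?_, ?_, ?_⟩
  · intro I hI; exact hI.1.1
  · intro x y hxy hy I hI
    exact hI.1.2.1 x y hxy (hy I hI)
  · intro x y hx hy I hI
    exact hI.1.2.2.1 x y (hx I hI) (hy I hI)
  · intro x c hx
    constructor
    · intro I hI; exact (hI.1.2.2.2 x c (hx I hI)).1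
    · intro I hI; exact (hI.1.2.2.2 x c (hx I hI)).2

private lemma mvw_subset_genIdeal (S : Set A) : S ⊆ MVWrig.genIdeal S := by
  intro s hs I hI
  exact hI.2 hs

private lemma mvw_genIdeal_le {S : Set A} {I : Set A} (hI : MVWrig.IsIdeal I) (hSI : S ⊆ I) :
    MVWrig.genIdeal S ⊆ I := fun x hx => hx I ⟨hI, hSI⟩

private lemma mvw_pow_mul_pow (y : A) (k l : ℕ) :
    MVWrig.mul (MVWrig.pow y k) (MVWrig.pow y l) = MVWrig.pow y (k + l + 1) := by
  induction l with
  | zero => rfl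
  | succ l ih =>
      show MVWrig.mul (MVWrig.pow y k) (MVWrig.mul (MVWrig.pow y l) y) = _
      rw [← MVWrig.mul_assoc, ih]
      rfl

private lemma mvw_mem_of_pow_mem {P : Set A} (hP : MVWrig.IsPrimeIdeal P) {y : A} {n : ℕ}
    (h : MVWrig.pow y n ∈ P) : y ∈ P := by
  induction n with
  | zero => exact h
  | succ n ih =>
      rcases hP.2 _ _ h with h' | h'
      · exact ih h'
      · exact h'

end Aux

open MVWrig in
/-- For `a, b` in a commutative MVW-rig with unitary element:
`V(a) ⊆ V(b)` iff `√⟨b⟩ ⊆ √⟨a⟩`, where `⟨x⟩` is the ideal generated by `{x}` and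
`√I = {y | yⁿ ∈ I for some n > 0}` (`pow y n = y^(n+1)` covers exponents `≥ 1`). -/
theorem stmt_16 {A : Type*} [MVWrig A]
    (hcomm : ∀ x y : A, mul x y = mul y x)
    (one : A) (hone : ∀ x : A, mul one x = x ∧ mul x one = x)
    (a b : A) :
    Vset a ⊆ Vset b ↔
      {y : A | ∃ n : ℕ, pow y n ∈ genIdeal {b}} ⊆
        {y : A | ∃ n : ℕ, pow y n ∈ genIdeal {a}} := by
  constructor
  · intro hV y hy
    obtain ⟨n, hn⟩ := hy
    by_contra hnot
    simp only [Set.mem_setOf_eq, not_exists] at hnot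
    set 𝒮 : Set (Set A) :=
      {I : Set A | MVWrig.IsIdeal I ∧ MVWrig.genIdeal {a} ⊆ I ∧ ∀ m : ℕ, MVWrig.pow y m ∉ I}
    have hbase : MVWrig.genIdeal {a} ∈ 𝒮 := ⟨mvw_genIdeal_isIdeal _, subset_refl _, hnot⟩
    have hchain : ∀ c ⊆ 𝒮, IsChain (· ⊆ ·) c → c.Nonempty →
        ∃ ub ∈ 𝒮, ∀ s ∈ c, s ⊆ ub := by
      rintro c hc hch ⟨I0, hI0⟩
      refine ⟨⋃₀ c, ⟨⟨?_, ?_, ?_, ?_⟩, ?_, ?_⟩, fun s hs => Set.subset_sUnion_of_mem hs⟩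
      · exact ⟨I0, hI0, (hc hI0).1.1⟩
      · rintro x z hxz ⟨I, hI, hzI⟩
        exact ⟨I, hI, (hc hI).1.2.1 x z hxz hzI⟩
      · rintro x z ⟨I, hI, hxI⟩ ⟨J, hJ, hzJ⟩
        rcases hch.total hI hJ with h | h
        · exact ⟨J, hJ, (hc hJ).1.2.2.1 x z (h hxI) hzJ⟩
        · exact ⟨I, hI, (hc hI).1.2.2.1 x z hxI (h hzJ)⟩
      · rintro x d ⟨I, hI, hxI⟩
        exact ⟨⟨I, hI, ((hc hI).1.2.2.2 x d hxI).1⟩, ⟨I, hI, ((hc hI).1.2.2.2 x d hxI).2⟩⟩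
      · intro x hx
        exact ⟨I0, hI0, (hc hI0).2.1 hx⟩
      · rintro m ⟨I, hI, hmI⟩
        exact (hc hI).2.2 m hmI
    obtain ⟨P, -, hPmax⟩ := zorn_subset_nonempty 𝒮 hchain _ hbase
    obtain ⟨hPideal, haP, hPpow⟩ := hPmax.1
    have hprime : MVWrig.IsPrimeIdeal P := by
      refine ⟨hPideal, ?_⟩
      intro u v huv
      by_contra hcon
      push_neg at hcon
      obtain ⟨hu, hv⟩ := hcon
      have hPJu : P ⊆ Jset P u := fun p hp => mvw_mem_Jset_of_mem hp
      have hPJv : P ⊆ Jset P v := fun p hp => mvw_mem_Jset_of_mem hp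
      have hJu_not : ¬ (∀ m : ℕ, MVWrig.pow y m ∉ Jset P u) := by
        intro hok
        have hmem : Jset P u ∈ 𝒮 :=
          ⟨mvw_Jset_isIdeal hPideal hcomm u, haP.trans hPJu, hok⟩
        exact hu ((hPmax.2 hmem hPJu) (mvw_u_mem_Jset hPideal one hone u))
      have hJv_not : ¬ (∀ m : ℕ, MVWrig.pow y m ∉ Jset P v) := by
        intro hok
        have hmem : Jset P v ∈ 𝒮 :=
          ⟨mvw_Jset_isIdeal hPideal hcomm v, haP.trans hPJv, hok⟩
        exact hv ((hPmax.2 hmem hPJv) (mvw_u_mem_Jset hPideal one hone v))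
      push_neg at hJu_not hJv_not
      obtain ⟨k, hk⟩ := hJu_not
      obtain ⟨l, hl⟩ := hJv_not
      have hkey := mvw_key_mul_mem hPideal hcomm huv hk hl
      rw [mvw_pow_mul_pow] at hkey
      exact hPpow _ hkey
    have haPmem : a ∈ P := haP (mvw_subset_genIdeal {a} rfl)
    have hbP : b ∈ P := hV (show (⟨P, hprime⟩ : MVSpec A) ∈ Vset a from haPmem)
    have hgb : MVWrig.genIdeal {b} ⊆ P :=
      mvw_genIdeal_le hPideal (by intro x hx; rw [Set.mem_singleton_iff] at hx; rwa [hx])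
    exact hPpow n (hgb hn)
  · intro hR P haP
    have hb : b ∈ {y : A | ∃ n : ℕ, MVWrig.pow y n ∈ MVWrig.genIdeal {b}} :=
      ⟨0, mvw_subset_genIdeal {b} rfl⟩
    obtain ⟨n, hn⟩ := hR hb
    have hsub : MVWrig.genIdeal {a} ⊆ P.val :=
      mvw_genIdeal_le P.2.1 (by intro x hx; rw [Set.mem_singleton_iff] at hx; rwa [hx])
    exact mvw_mem_of_pow_mem P.2 (hsub hn)
end

section
/- Let A be a commutative MVW-rig with unitary element, and give Spec(A) (the set of prime ideals of A) the co-Zariski topology generated by the base { V(a) : a ∈ A } where V(a) = { P ∈ Spec(A) : a ∈ P }. Then for P, Q ∈ Spec(A): Q belongs to the topological closure of {P} if and only if Q ⊆ P. Consequently Spec(A) is a T0 space. -/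
/-- The co-Zariski topology on the prime spectrum, generated by the base `{V(a) : a ∈ A}`. -/
instance {A : Type*} [MVWrig A] : TopologicalSpace (MVSpec A) :=
  TopologicalSpace.generateFrom {s : Set (MVSpec A) | ∃ a : A, s = Vset a}

/-- In the co-Zariski topology on the spectrum of a commutative MVW-rig with unitary
element, `Q ∈ closure {P}` iff `Q ⊆ P`; consequently the spectrum is a T0 space. -/
theorem stmt_17 {A : Type*} [MVWrig A]
    (hcomm : ∀ x y : A, MVWrig.mul x y = MVWrig.mul y x)
    (one : A) (hone : ∀ x : A, MVWrig.mul one x = x ∧ MVWrig.mul x one = x) :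
    (∀ P Q : MVSpec A, Q ∈ closure {P} ↔ Q.val ⊆ P.val) ∧ T0Space (MVSpec A) := by
  have key : ∀ P Q : MVSpec A, Q ∈ closure {P} ↔ Q.val ⊆ P.val := by
    intro P Q
    constructor
    · intro h a haQ
      have hopen : IsOpen (Vset a : Set (MVSpec A)) :=
        TopologicalSpace.GenerateOpen.basic _ ⟨a, rfl⟩
      rcases mem_closure_iff.mp h (Vset a) hopen haQ with ⟨x, hx, hxP⟩
      rcases hxP with rfl
      exact hx
    · intro hQP
      rw [mem_closure_iff]
      intro o ho hQo
      refine ⟨P, ?_, rfl⟩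
      induction ho with
      | basic s hs => rcases hs with ⟨a, rfl⟩; exact hQP hQo
      | univ => trivial
      | inter s t _ _ ihs iht => exact ⟨ihs hQo.1, iht hQo.2⟩
      | sUnion S _ ih =>
          rcases hQo with ⟨s, hsS, hQs⟩
          exact ⟨s, hsS, ih s hsS hQs⟩
  refine ⟨key, ?_⟩
  rw [t0Space_iff_inseparable]
  intro P Q hins
  have h1 : Q ∈ closure ({P} : Set (MVSpec A)) := by
    rw [((inseparable_iff_closure_eq).mp hins)]
    exact subset_closure rfl
  have h2 : P ∈ closure ({Q} : Set (MVSpec A)) := by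
    rw [← ((inseparable_iff_closure_eq).mp hins)]
    exact subset_closure rfl
  exact Subtype.ext (le_antisymm ((key Q P).mp h2) ((key P Q).mp h1))
end
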